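/- Let G₁ and G₂ be finite simple graphs of orders n₁, n₂ and sizes m₁, m₂, with maximum degrees Δ₁, Δ₂ and minimum degrees δ₁, δ₂. Then the Euler Sombor index of the join satisfies √3·m₁·(δ₁+n₂) + √3·m₂·(δ₂+n₁) + n₁n₂·√((δ₁+n₂)² + (δ₂+n₁)² + (δ₁+n₂)(δ₂+n₁)) ≤ EU(G₁+G₂) ≤ √3·m₁·(Δ₁+n₂) + √3·m₂·(Δ₂+n₁) + n₁n₂·√((Δ₁+n₂)² + (Δ₂+n₁)² + (Δ₁+n₂)(Δ₂+n₁)). -/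

import Mathlib

/-!
In `G₁ + G₂` a vertex of `Gᵢ` has its degree raised by the order of the other graph, and the
edges fall into three classes: those of `G₁`, those of `G₂`, and the `n₁ n₂` edges across.
The edge weight `√(x² + y² + xy)` is monotone in both degrees, so each edge is bounded by the
weight at the extreme degrees; within `Gᵢ` both endpoints are bounded by the same value `c`,
where the weight is `√3 c`.
-/

open Finset SimpleGraph
open scoped Classical

noncomputable def ESO {V : Type*} [Fintype V] (G : SimpleGraph V) : Real :=
  Finset.sum G.edgeSet.toFinset fun e =>
    Sym2.lift ⟨fun u v => ((G.degree u : Real) + (G.degree v : Real)) *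
        Real.sqrt ((G.degree u : Real) ^ 2 + (G.degree v : Real) ^ 2),
      fun u v => by
        dsimp only; rw [add_comm (G.degree u : Real), add_comm ((G.degree u : Real) ^ 2)]⟩ e

noncomputable def EU {V : Type*} [Fintype V] (G : SimpleGraph V) : Real :=
  Finset.sum G.edgeSet.toFinset fun e =>
    Sym2.lift ⟨fun u v => Real.sqrt ((G.degree u : Real) ^ 2 + (G.degree v : Real) ^ 2 +
        (G.degree u : Real) * (G.degree v : Real)),
      fun u v => by
        dsimp only; rw [mul_comm (G.degree u : Real), add_comm ((G.degree u : Real) ^ 2)]⟩ e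

noncomputable def edgeCount {V : Type*} [Fintype V] (G : SimpleGraph V) : Nat :=
  G.edgeSet.toFinset.card

def graphJoin {V1 V2 : Type*} (G1 : SimpleGraph V1) (G2 : SimpleGraph V2) :
    SimpleGraph (V1 ⊕ V2) where
  Adj x y :=
    match x, y with
    | Sum.inl a, Sum.inl b => G1.Adj a b
    | Sum.inr a, Sum.inr b => G2.Adj a b
    | Sum.inl _, Sum.inr _ => True
    | Sum.inr _, Sum.inl _ => True
  symm := by
    constructor
    rintro (a | a) (b | b) h
    · exact G1.adj_symm h
    · trivial
    · trivial
    · exact G2.adj_symm h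
  loopless := by
    constructor
    rintro (a | a) h
    · exact G1.loopless.irrefl a h
    · exact G2.loopless.irrefl a h

noncomputable def euWeight (x y : ℝ) : ℝ := √(x ^ 2 + y ^ 2 + x * y)

lemma euWeight_comm (x y : ℝ) : euWeight x y = euWeight y x := by
  unfold euWeight; ring_nf

lemma euWeight_le_euWeight {x y x' y' : ℝ} (hx0 : 0 ≤ x) (hy0 : 0 ≤ y) (hx : x ≤ x')
    (hy : y ≤ y') : euWeight x y ≤ euWeight x' y' :=
  Real.sqrt_le_sqrt (by nlinarith)

lemma euWeight_self {c : ℝ} (hc : 0 ≤ c) : euWeight c c = √3 * c := by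
  rw [euWeight, show c ^ 2 + c ^ 2 + c * c = 3 * c ^ 2 by ring, Real.sqrt_mul zero_le_three,
    Real.sqrt_sq hc]

lemma card_mul_card_mul_euWeight_le_sum {V1 V2 : Type*} [Fintype V1] [Fintype V2]
    {f : V1 → ℝ} {g : V2 → ℝ} {a b : ℝ} (ha : 0 ≤ a) (hb : 0 ≤ b) (hf : ∀ u, a ≤ f u)
    (hg : ∀ v, b ≤ g v) :
    Fintype.card V1 * Fintype.card V2 * euWeight a b ≤ ∑ p : V1 × V2, euWeight (f p.1) (g p.2) := by
  have := card_nsmul_le_sum (univ : Finset (V1 × V2)) _ _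
    fun p _ => euWeight_le_euWeight ha hb (hf p.1) (hg p.2)
  simpa [Fintype.card_prod] using this

lemma sum_euWeight_le_card_mul_card_mul {V1 V2 : Type*} [Fintype V1] [Fintype V2]
    {f : V1 → ℝ} {g : V2 → ℝ} {a b : ℝ} (hf0 : ∀ u, 0 ≤ f u) (hg0 : ∀ v, 0 ≤ g v)
    (hf : ∀ u, f u ≤ a) (hg : ∀ v, g v ≤ b) :
    ∑ p : V1 × V2, euWeight (f p.1) (g p.2) ≤ Fintype.card V1 * Fintype.card V2 * euWeight a b := by
  have := sum_le_card_nsmul (univ : Finset (V1 × V2)) _ _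
    fun p _ => euWeight_le_euWeight (hf0 p.1) (hg0 p.2) (hf p.1) (hg p.2)
  simpa [Fintype.card_prod] using this

section euEdgeWeight

variable {V : Type*} (f : V → ℝ)

noncomputable def euEdgeWeight : Sym2 V → ℝ :=
  Sym2.lift ⟨fun u v => euWeight (f u) (f v), fun _ _ => euWeight_comm _ _⟩

@[simp] lemma euEdgeWeight_mk (u v : V) : euEdgeWeight f s(u, v) = euWeight (f u) (f v) := rfl

lemma EU_eq_sum_euEdgeWeight [Fintype V] (G : SimpleGraph V) :
    EU G = ∑ e ∈ G.edgeSet.toFinset, euEdgeWeight (fun v => (G.degree v : ℝ)) e := rfl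

variable {f}

lemma sqrt_three_mul_card_mul_le_sum_euEdgeWeight {a : ℝ} (ha : 0 ≤ a) (hf : ∀ v, a ≤ f v)
    (s : Finset (Sym2 V)) : √3 * s.card * a ≤ ∑ e ∈ s, euEdgeWeight f e := by
  have := card_nsmul_le_sum s _ _ fun e _ => show √3 * a ≤ euEdgeWeight f e by
    induction e using Sym2.ind with
    | _ u v =>
      rw [euEdgeWeight_mk, ← euWeight_self ha]
      exact euWeight_le_euWeight ha ha (hf u) (hf v)
  rw [nsmul_eq_mul] at this
  linarith

lemma sum_euEdgeWeight_le_sqrt_three_mul_card_mul {b : ℝ} (hf0 : ∀ v, 0 ≤ f v)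
    (hf : ∀ v, f v ≤ b) (s : Finset (Sym2 V)) : ∑ e ∈ s, euEdgeWeight f e ≤ √3 * s.card * b := by
  have := sum_le_card_nsmul s _ _ fun e _ => show euEdgeWeight f e ≤ √3 * b by
    induction e using Sym2.ind with
    | _ u v =>
      rw [euEdgeWeight_mk, ← euWeight_self ((hf0 u).trans (hf u))]
      exact euWeight_le_euWeight (hf0 u) (hf0 v) (hf u) (hf v)
  rw [nsmul_eq_mul] at this
  linarith

end euEdgeWeight

section graphJoin

variable {V1 V2 : Type*} (G1 : SimpleGraph V1) (G2 : SimpleGraph V2)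

@[simp] lemma graphJoin_adj_inl_inl (a b : V1) :
    (graphJoin G1 G2).Adj (.inl a) (.inl b) ↔ G1.Adj a b := .rfl
@[simp] lemma graphJoin_adj_inr_inr (a b : V2) :
    (graphJoin G1 G2).Adj (.inr a) (.inr b) ↔ G2.Adj a b := .rfl
@[simp] lemma graphJoin_adj_inl_inr (a : V1) (b : V2) :
    (graphJoin G1 G2).Adj (.inl a) (.inr b) := trivial
@[simp] lemma graphJoin_adj_inr_inl (a : V2) (b : V1) :
    (graphJoin G1 G2).Adj (.inr a) (.inl b) := trivial

variable [Fintype V1] [Fintype V2]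

lemma edgeSet_toFinset_graphJoin :
    (graphJoin G1 G2).edgeSet.toFinset =
      (G1.edgeSet.toFinset.map (Function.Embedding.inl.sym2Map) ∪
        G2.edgeSet.toFinset.map (Function.Embedding.inr.sym2Map)) ∪
      (univ : Finset (V1 × V2)).image (fun p => s(Sum.inl p.1, Sum.inr p.2)) := by
  ext e
  induction e using Sym2.ind with
  | _ x y =>
    rcases x with x | x <;> rcases y with y | y <;>
      simp [Sym2.exists, and_or_left, exists_or, G1.adj_comm, G2.adj_comm]

lemma sum_edgeSet_toFinset_graphJoin {M : Type*} [AddCommMonoid M] (f : Sym2 (V1 ⊕ V2) → M) :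
    ∑ e ∈ (graphJoin G1 G2).edgeSet.toFinset, f e =
      ∑ e ∈ G1.edgeSet.toFinset, f (e.map .inl) + ∑ e ∈ G2.edgeSet.toFinset, f (e.map .inr) +
      ∑ p : V1 × V2, f s(.inl p.1, .inr p.2) := by
  rw [edgeSet_toFinset_graphJoin, sum_union, sum_union, sum_map, sum_map, sum_image]
  · rfl
  · rintro ⟨a, b⟩ - ⟨a', b'⟩ - h
    simpa using h
  · simp [Finset.disjoint_left, Sym2.forall]
  · simp [Finset.disjoint_left, Sym2.forall]

lemma degree_graphJoin_inl (a : V1) :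
    (graphJoin G1 G2).degree (.inl a) = G1.degree a + Fintype.card V2 := by
  rw [← card_neighborSet_eq_degree, ← card_neighborSet_eq_degree]
  have e : (graphJoin G1 G2).neighborSet (.inl a) ≃ G1.neighborSet a ⊕ V2 :=
    Equiv.subtypeSum.trans (.sumCongr (.refl _) (Equiv.subtypeUnivEquiv fun _ => trivial))
  rw [Fintype.card_congr e, Fintype.card_sum]

lemma degree_graphJoin_inr (b : V2) :
    (graphJoin G1 G2).degree (.inr b) = G2.degree b + Fintype.card V1 := by
  rw [← card_neighborSet_eq_degree, ← card_neighborSet_eq_degree]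
  have e : (graphJoin G1 G2).neighborSet (.inr b) ≃ V1 ⊕ G2.neighborSet b :=
    Equiv.subtypeSum.trans (.sumCongr (Equiv.subtypeUnivEquiv fun _ => trivial) (.refl _))
  rw [Fintype.card_congr e, Fintype.card_sum, add_comm]

lemma EU_graphJoin :
    EU (graphJoin G1 G2) =
      ∑ e ∈ G1.edgeSet.toFinset, euEdgeWeight (fun a => G1.degree a + (Fintype.card V2 : ℝ)) e +
      ∑ e ∈ G2.edgeSet.toFinset, euEdgeWeight (fun b => G2.degree b + (Fintype.card V1 : ℝ)) e +
      ∑ p : V1 × V2,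
        euWeight (G1.degree p.1 + Fintype.card V2) (G2.degree p.2 + Fintype.card V1) := by
  rw [EU_eq_sum_euEdgeWeight, sum_edgeSet_toFinset_graphJoin]
  congr 1
  · congr 1 <;> refine sum_congr rfl fun e _ => ?_ <;> induction e using Sym2.ind <;>
      simp [degree_graphJoin_inl, degree_graphJoin_inr]
  · simp [degree_graphJoin_inl, degree_graphJoin_inr]

end graphJoin

theorem eu_join_bounds {V1 V2 : Type*} [Fintype V1] [Fintype V2]
    (G1 : SimpleGraph V1) (G2 : SimpleGraph V2) :
    Real.sqrt 3 * (edgeCount G1 : Real) * ((G1.minDegree : Real) + Fintype.card V2) +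
      Real.sqrt 3 * (edgeCount G2 : Real) * ((G2.minDegree : Real) + Fintype.card V1) +
      (Fintype.card V1 : Real) * (Fintype.card V2 : Real) *
        Real.sqrt (((G1.minDegree : Real) + Fintype.card V2) ^ 2 +
          ((G2.minDegree : Real) + Fintype.card V1) ^ 2 +
          ((G1.minDegree : Real) + Fintype.card V2) * ((G2.minDegree : Real) + Fintype.card V1))
      ≤ EU (graphJoin G1 G2) ∧
    EU (graphJoin G1 G2) ≤
      Real.sqrt 3 * (edgeCount G1 : Real) * ((G1.maxDegree : Real) + Fintype.card V2) +
      Real.sqrt 3 * (edgeCount G2 : Real) * ((G2.maxDegree : Real) + Fintype.card V1) +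
      (Fintype.card V1 : Real) * (Fintype.card V2 : Real) *
        Real.sqrt (((G1.maxDegree : Real) + Fintype.card V2) ^ 2 +
          ((G2.maxDegree : Real) + Fintype.card V1) ^ 2 +
          ((G1.maxDegree : Real) + Fintype.card V2) * ((G2.maxDegree : Real) + Fintype.card V1)) := by
  have hδ1 (u : V1) : (G1.minDegree : ℝ) + Fintype.card V2 ≤ G1.degree u + Fintype.card V2 := by
    gcongr; exact G1.minDegree_le_degree u
  have hδ2 (v : V2) : (G2.minDegree : ℝ) + Fintype.card V1 ≤ G2.degree v + Fintype.card V1 := by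
    gcongr; exact G2.minDegree_le_degree v
  have hΔ1 (u : V1) : (G1.degree u : ℝ) + Fintype.card V2 ≤ G1.maxDegree + Fintype.card V2 := by
    gcongr; exact G1.degree_le_maxDegree u
  have hΔ2 (v : V2) : (G2.degree v : ℝ) + Fintype.card V1 ≤ G2.maxDegree + Fintype.card V1 := by
    gcongr; exact G2.degree_le_maxDegree v
  have hnonneg1 (u : V1) : (0 : ℝ) ≤ G1.degree u + Fintype.card V2 := by positivity
  have hnonneg2 (v : V2) : (0 : ℝ) ≤ G2.degree v + Fintype.card V1 := by positivity
  rw [EU_graphJoin]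
  exact ⟨add_le_add (add_le_add
      (sqrt_three_mul_card_mul_le_sum_euEdgeWeight (by positivity) hδ1 _)
      (sqrt_three_mul_card_mul_le_sum_euEdgeWeight (by positivity) hδ2 _))
      (card_mul_card_mul_euWeight_le_sum (by positivity) (by positivity) hδ1 hδ2),
    add_le_add (add_le_add
      (sum_euEdgeWeight_le_sqrt_three_mul_card_mul hnonneg1 hΔ1 _)
      (sum_euEdgeWeight_le_sqrt_three_mul_card_mul hnonneg2 hΔ2 _))
      (sum_euWeight_le_card_mul_card_mul hnonneg1 hnonneg2 hΔ1 hΔ2)⟩
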